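/- arXiv:2108.04764 — 2 statements merged into one kernel-verified Lean document; each statement's English description precedes it below -/
import Mathlib

section
/- For r ≥ 3 odd, the edge-forcing number of BF(r) satisfies 2^r ≤ ζ_e(BF(r)) ≤ ⌈r/2⌉ · 2^(r-1). -/
open SimpleGraph

/-- Zero-forcing closure: `ZFForced G S v` means `v` is eventually forced
starting from the initially-forced set `S`. A forced vertex `u` whose neighbors,
with the single exception of `v`, are all forced, forces `v`. -/
inductive ZFForced {V : Type*} (G : SimpleGraph V) (S : Set V) : V → Prop
  | init {v : V} : v ∈ S → ZFForced G S v
  | force {u v : V} : ZFForced G S u → G.Adj u v →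
      (∀ w, G.Adj u w → w ≠ v → ZFForced G S w) → ZFForced G S v

/-- `S` is a zero forcing set of `G` if its closure is all of `V`. -/
def IsZeroForcingSet {V : Type*} (G : SimpleGraph V) (S : Set V) : Prop :=
  ∀ v : V, ZFForced G S v

/-- `K` is an edge-forcing set of `G`: a set of pairwise non-adjacent
(vertex-disjoint) edges of `G` whose endpoint set is a zero forcing set. -/
def IsEdgeForcingSet {V : Type*} (G : SimpleGraph V) (K : Set (Sym2 V)) : Prop :=
  K ⊆ G.edgeSet ∧
  K.Pairwise (fun e f => ∀ v : V, v ∈ e → v ∉ f) ∧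
  IsZeroForcingSet G {v : V | ∃ e ∈ K, v ∈ e}

/-- The edge-forcing number: minimum cardinality of an edge-forcing set. -/
noncomputable def edgeForcingNumber {V : Type*} (G : SimpleGraph V) : ℕ :=
  sInf {n : ℕ | ∃ K : Set (Sym2 V), IsEdgeForcingSet G K ∧ K.ncard = n}

/-- The `r`-dimensional butterfly network: vertices `(w, i)` with
`w : Fin r → Bool` and level `i : Fin (r+1)`; `(w,i)` is adjacent to `(w',i+1)`
iff `w = w'` or `w` and `w'` differ exactly in bit `i+1` (index `i`, 0-based). -/
def butterfly (r : ℕ) : SimpleGraph ((Fin r → Bool) × Fin (r + 1)) :=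
  SimpleGraph.fromRel (fun p q =>
    (p.2 : ℕ) + 1 = (q.2 : ℕ) ∧
      (p.1 = q.1 ∨ ∀ k : Fin r, (p.1 k ≠ q.1 k ↔ (k : ℕ) = (p.2 : ℕ))))

/-!
A *fort* is a nonempty vertex set `F` such that every vertex outside `F` with a neighbour in `F`
has at least two; no vertex of a fort can be the first of it to be forced, so every zero forcing
set meets every fort. In `BF(r)` the pairs of words differing only in bit `0`, placed at level `0`,
and the pairs differing only in the last bit, placed at level `r`, are `2 ^ r` disjoint forts, and
for `r ≥ 2` no edge meets two of them. Hence every edge-forcing set has at least `2 ^ r` edges.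

For `r = 2m + 1`, the straight edges `(w, 2j) — (w, 2j + 1)` with `w (2j) = false` form an
edge-forcing set with `(m + 1) 2 ^ (2m)` edges. A vertex `(w, l)` with `l ∈ {2j, 2j + 1}` not on
one of them differs in bit `2j` from the word `v` of such an edge, and it is the only unforced
neighbour of the endpoint of that edge on the other level as soon as the neighbours of that
endpoint away from level `l` are forced. So the odd levels are forced bottom-up, and then the even
levels top-down.
-/

section Forts

variable {V : Type*} {G : SimpleGraph V}

def IsFort (G : SimpleGraph V) (F : Set V) : Prop :=
  F.Nonempty ∧ ∀ u ∉ F, ∀ x ∈ F, G.Adj u x → ∃ y ∈ F, y ≠ x ∧ G.Adj u y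

theorem IsFort.of_forall_adj {F : Set V} (hF : F.Nontrivial)
    (h : ∀ u ∉ F, ∀ x ∈ F, G.Adj u x → ∀ y ∈ F, G.Adj u y) : IsFort G F :=
  ⟨hF.nonempty, fun u hu x hx hux =>
    let ⟨y, hy, hyx⟩ := hF.exists_ne x
    ⟨y, hy, hyx, h u hu x hx hux y hy⟩⟩

theorem IsZeroForcingSet.inter_nonempty_of_isFort {S F : Set V} (hS : IsZeroForcingSet G S)
    (hF : IsFort G F) : (S ∩ F).Nonempty := by
  by_contra hSF
  have hnot : ∀ v, ZFForced G S v → v ∉ F := by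
    intro v hv
    induction hv with
    | init hvS => exact fun hvF => hSF ⟨_, hvS, hvF⟩
    | force _ hadj _ ihu ihnb =>
      intro hvF
      obtain ⟨y, hyF, hyv, hadjy⟩ := hF.2 _ ihu _ hvF hadj
      exact ihnb y hadjy hyv hyF
  obtain ⟨x, hx⟩ := hF.1
  exact hnot x (hS x) hx

theorem nat_card_le_ncard_of_isFort [Finite V] {K : Set (Sym2 V)}
    (hK : IsZeroForcingSet G {v | ∃ e ∈ K, v ∈ e}) {ι : Type*} (F : ι → Set V)
    (hF : ∀ i, IsFort G (F i))
    (hsep : ∀ e ∈ K, ∀ i j, ∀ x ∈ F i, ∀ y ∈ F j, x ∈ e → y ∈ e → i = j) :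
    Nat.card ι ≤ K.ncard := by
  have hmeet : ∀ i, ∃ e ∈ K, ∃ x ∈ F i, x ∈ e := fun i =>
    let ⟨x, ⟨e, he, hxe⟩, hx⟩ := hK.inter_nonempty_of_isFort (hF i)
    ⟨e, he, x, hx, hxe⟩
  choose e he x hx hxe using hmeet
  have hinj : Function.Injective fun i => (⟨e i, he i⟩ : K) := fun i j hij =>
    hsep (e i) (he i) i j (x i) (hx i) (x j) (hx j) (hxe i)
      (by rw [Subtype.mk.inj hij]; exact hxe j)
  exact (Nat.card_le_card_of_injective _ hinj).trans_eq (Nat.card_coe_set_eq K)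

theorem eq_or_adj_of_mem_edgeSet {e : Sym2 V} (he : e ∈ G.edgeSet) {x y : V} (hx : x ∈ e)
    (hy : y ∈ e) : x = y ∨ G.Adj x y := by
  by_cases hxy : x = y
  · exact Or.inl hxy
  · rw [(Sym2.mem_and_mem_iff hxy).1 ⟨hx, hy⟩] at he
    exact Or.inr he

end Forts

section Butterfly

variable {r : ℕ}

/-- The bit index is a natural number so that a level can serve as one; for `b ≥ r` the relation
is equality. -/
def AgreeOff (b : ℕ) (v w : Fin r → Bool) : Prop :=
  ∀ i : Fin r, (i : ℕ) ≠ b → v i = w i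

theorem AgreeOff.symm {b : ℕ} {v w : Fin r → Bool} (h : AgreeOff b v w) : AgreeOff b w v :=
  fun i hi => (h i hi).symm

theorem AgreeOff.trans {b : ℕ} {u v w : Fin r → Bool} (huv : AgreeOff b u v)
    (hvw : AgreeOff b v w) : AgreeOff b u w :=
  fun i hi => (huv i hi).trans (hvw i hi)

theorem agreeOff_update (v : Fin r → Bool) (k : Fin r) (a : Bool) :
    AgreeOff k (Function.update v k a) v :=
  fun _ hi => Function.update_of_ne (fun h => hi (congrArg Fin.val h)) _ _

theorem AgreeOff.eq_of_apply_eq {k : Fin r} {v w : Fin r → Bool} (h : AgreeOff k v w)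
    (hk : v k = w k) : v = w := by
  funext i
  by_cases hi : (i : ℕ) = k
  · rwa [Fin.ext hi]
  · exact h i hi

theorem AgreeOff.eq_or_eq {b : ℕ} {u v w : Fin r → Bool} (hu : AgreeOff b v u)
    (hw : AgreeOff b v w) (hvw : v ≠ w) : u = v ∨ u = w := by
  obtain ⟨k, hk⟩ := Function.ne_iff.1 hvw
  obtain rfl : (k : ℕ) = b := by_contra fun h => hk (hw k h)
  by_cases huv : u k = v k
  · exact Or.inl (hu.symm.eq_of_apply_eq huv)
  · refine Or.inr ((hu.symm.trans hw).eq_of_apply_eq ?_)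
    revert huv hk
    cases u k <;> cases v k <;> cases w k <;> simp

theorem agreeOff_iff {b : ℕ} {v w : Fin r → Bool} :
    AgreeOff b v w ↔ v = w ∨ ∀ i : Fin r, (v i ≠ w i ↔ (i : ℕ) = b) := by
  constructor
  · intro h
    by_cases hvw : v = w
    · exact Or.inl hvw
    obtain ⟨k, hk⟩ := Function.ne_iff.1 hvw
    have hkb : (k : ℕ) = b := by_contra fun hkb => hk (h k hkb)
    refine Or.inr fun i => ⟨fun hi => by_contra fun hib => hi (h i hib), fun hib => ?_⟩
    rwa [Fin.ext (hib.trans hkb.symm)]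
  · rintro (rfl | h) i hi
    · rfl
    · exact by_contra fun hne => hi ((h i).1 hne)

theorem butterfly_adj_iff {p q : (Fin r → Bool) × Fin (r + 1)} :
    (butterfly r).Adj p q ↔
      ((p.2 : ℕ) + 1 = q.2 ∧ AgreeOff p.2 p.1 q.1) ∨
        ((q.2 : ℕ) + 1 = p.2 ∧ AgreeOff q.2 q.1 p.1) := by
  rw [butterfly, fromRel_adj, agreeOff_iff, agreeOff_iff]
  refine ⟨And.right, fun h => ⟨?_, h⟩⟩
  rintro rfl
  omega

theorem butterfly_level_of_adj {p q : (Fin r → Bool) × Fin (r + 1)}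
    (h : (butterfly r).Adj p q) : (p.2 : ℕ) + 1 = q.2 ∨ (q.2 : ℕ) + 1 = p.2 := by
  rcases butterfly_adj_iff.1 h with h | h
  exacts [Or.inl h.1, Or.inr h.1]

theorem nat_card_apply_eq_false (k : Fin r) :
    Nat.card {w : Fin r → Bool // w k = false} = 2 ^ (r - 1) := by
  rw [Nat.card_congr ((Equiv.funSplitAt k Bool).subtypeEquiv (p := fun w => w k = false)
      (q := fun p => p.1 = false) fun _ => Iff.rfl),
    Nat.card_congr (Equiv.prodSubtypeFstEquivSubtypeProd (p := fun b : Bool => b = false))]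
  simp [Fintype.card_subtype_compl]

def agreeClass (l b : ℕ) (g : Fin r → Bool) : Set ((Fin r → Bool) × Fin (r + 1)) :=
  {x | (x.2 : ℕ) = l ∧ AgreeOff b g x.1}

theorem agreeClass_nontrivial {l : ℕ} (hl : l ≤ r) (k : Fin r) (g : Fin r → Bool) :
    (agreeClass l k g).Nontrivial :=
  ⟨(g, ⟨l, by omega⟩), ⟨rfl, fun _ _ => rfl⟩, (Function.update g k (!g k), ⟨l, by omega⟩),
    ⟨rfl, (agreeOff_update g k _).symm⟩, fun h => by
      simpa using congrFun (congrArg Prod.fst h) k⟩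

theorem isFort_agreeClass_zero (hr : 0 < r) (g : Fin r → Bool) :
    IsFort (butterfly r) (agreeClass 0 0 g) := by
  refine IsFort.of_forall_adj (agreeClass_nontrivial (Nat.zero_le r) ⟨0, hr⟩ g) ?_
  rintro u - x ⟨hx, hgx⟩ hux y ⟨hy, hgy⟩
  rcases butterfly_adj_iff.1 hux with ⟨h, -⟩ | ⟨h, hxu⟩
  · omega
  · rw [hx] at hxu h
    exact butterfly_adj_iff.2 (Or.inr ⟨by omega, hy ▸ (hgy.symm.trans hgx).trans hxu⟩)

theorem isFort_agreeClass_last (hr : 0 < r) (g : Fin r → Bool) :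
    IsFort (butterfly r) (agreeClass r (r - 1) g) := by
  refine IsFort.of_forall_adj (agreeClass_nontrivial le_rfl ⟨r - 1, by omega⟩ g) ?_
  rintro u - x ⟨hx, hgx⟩ hux y ⟨hy, hgy⟩
  rcases butterfly_adj_iff.1 hux with ⟨h, hux⟩ | ⟨h, -⟩
  · have hu : (u.2 : ℕ) = r - 1 := by omega
    rw [hu] at hux
    exact butterfly_adj_iff.2 (Or.inl ⟨by omega, hu ▸ hux.trans (hgx.symm.trans hgy)⟩)
  · have := u.2.isLt
    omega

theorem two_pow_le_ncard_of_isEdgeForcingSet_butterfly {n : ℕ} (hn : 1 ≤ n)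
    {K : Set (Sym2 ((Fin (n + 1) → Bool) × Fin (n + 2)))}
    (hK : IsEdgeForcingSet (butterfly (n + 1)) K) : 2 ^ (n + 1) ≤ K.ncard := by
  let F : {g : Fin (n + 1) → Bool // g 0 = false} ⊕
      {g : Fin (n + 1) → Bool // g (Fin.last n) = false} →
      Set ((Fin (n + 1) → Bool) × Fin (n + 2)) :=
    Sum.elim (fun g => agreeClass 0 0 g.1) (fun g => agreeClass (n + 1) n g.1)
  have hF : ∀ i, IsFort (butterfly (n + 1)) (F i) := by
    rintro (g | g)
    exacts [isFort_agreeClass_zero n.succ_pos g.1, isFort_agreeClass_last n.succ_pos g.1]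
  have hsep : ∀ e ∈ K, ∀ i j, ∀ x ∈ F i, ∀ y ∈ F j, x ∈ e → y ∈ e → i = j := by
    intro e he i j x hx y hy hxe hye
    have hxy : x = y ∨ (x.2 : ℕ) + 1 = y.2 ∨ (y.2 : ℕ) + 1 = x.2 :=
      (eq_or_adj_of_mem_edgeSet (hK.1 he) hxe hye).imp_right butterfly_level_of_adj
    rcases i with g | g <;> rcases j with g' | g' <;> obtain ⟨hxl, hgx⟩ := hx <;>
      obtain ⟨hyl, hgy⟩ := hy
    · obtain rfl : x = y := hxy.resolve_right (by omega)
      exact congrArg Sum.inl (Subtype.ext ((hgx.trans hgy.symm).eq_of_apply_eq (k := 0)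
        (g.2.trans g'.2.symm)))
    · rcases hxy with rfl | h | h <;> omega
    · rcases hxy with rfl | h | h <;> omega
    · obtain rfl : x = y := hxy.resolve_right (by omega)
      exact congrArg Sum.inr (Subtype.ext
        ((hgx.trans hgy.symm).eq_of_apply_eq (k := Fin.last n) (g.2.trans g'.2.symm)))
  calc 2 ^ (n + 1) = Nat.card ({g : Fin (n + 1) → Bool // g 0 = false} ⊕
        {g : Fin (n + 1) → Bool // g (Fin.last n) = false}) := by
        rw [Nat.card_sum, nat_card_apply_eq_false, nat_card_apply_eq_false, Nat.add_sub_cancel,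
          pow_succ, mul_two]
    _ ≤ K.ncard := nat_card_le_ncard_of_isFort hK.2.2 F hF hsep

def evenStraightEdges (r : ℕ) : Set (Sym2 ((Fin r → Bool) × Fin (r + 1))) :=
  {e | ∃ (k : Fin r) (w : Fin r → Bool), Even (k : ℕ) ∧ w k = false ∧
    e = s((w, k.castSucc), (w, k.succ))}

theorem evenStraightEdges_subset_edgeSet : evenStraightEdges r ⊆ (butterfly r).edgeSet := by
  rintro _ ⟨k, w, -, -, rfl⟩
  exact butterfly_adj_iff.2 (Or.inl ⟨rfl, fun _ _ => rfl⟩)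

theorem evenStraightEdges_pairwise_disjoint :
    (evenStraightEdges r).Pairwise fun e f => ∀ v, v ∈ e → v ∉ f := by
  rintro _ ⟨k, w, ⟨a, ha⟩, -, rfl⟩ _ ⟨k', w', ⟨a', ha'⟩, -, rfl⟩ hne v hv hv'
  have hk : k = k' := by
    rcases Sym2.mem_iff.1 hv with rfl | rfl <;> rcases Sym2.mem_iff.1 hv' with h | h <;>
      · have := congrArg (fun x => (x.2 : ℕ)) h
        simp only [Fin.val_castSucc, Fin.val_succ] at this
        exact Fin.ext (by omega)
  subst hk
  rcases Sym2.mem_iff.1 hv with rfl | rfl <;> rcases Sym2.mem_iff.1 hv' with h | h <;>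
    simp_all [Prod.ext_iff, Fin.ext_iff]

theorem update_mem_evenStraightEdges {k : Fin r} (hk : Even (k : ℕ)) (w : Fin r → Bool)
    {l : Fin (r + 1)} (hl : (l : ℕ) = k ∨ (l : ℕ) = k + 1) :
    (Function.update w k false, l) ∈ {x | ∃ e ∈ evenStraightEdges r, x ∈ e} := by
  refine ⟨s((Function.update w k false, k.castSucc), (Function.update w k false, k.succ)),
    ⟨k, _, hk, Function.update_self _ _ _, rfl⟩, ?_⟩
  rcases hl with hl | hl
  · rw [show l = k.castSucc from Fin.ext hl]
    exact Sym2.mem_mk_left _ _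
  · rw [show l = k.succ from Fin.ext hl]
    exact Sym2.mem_mk_right _ _

theorem ncard_evenStraightEdges_le (m : ℕ) :
    (evenStraightEdges (2 * m + 1)).ncard ≤ (m + 1) * 2 ^ (2 * m) := by
  let bit : Fin (m + 1) → Fin (2 * m + 1) := fun j => ⟨2 * j, by omega⟩
  let rungs : Fin (m + 1) → Set (Sym2 ((Fin (2 * m + 1) → Bool) × Fin (2 * m + 2))) := fun j =>
    (fun w => s((w, (bit j).castSucc), (w, (bit j).succ))) '' {w | w (bit j) = false}
  have hsub : evenStraightEdges (2 * m + 1) ⊆ ⋃ j, rungs j := by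
    rintro _ ⟨k, w, ⟨a, ha⟩, hw, rfl⟩
    have hk : k = bit ⟨a, by omega⟩ := Fin.ext (by simp [bit]; omega)
    rw [hk] at hw ⊢
    exact Set.mem_iUnion.2 ⟨_, w, hw, rfl⟩
  calc (evenStraightEdges (2 * m + 1)).ncard ≤ (⋃ j, rungs j).ncard := Set.ncard_le_ncard hsub
    _ ≤ ∑ j, (rungs j).ncard := Set.ncard_iUnion_le_of_fintype rungs
    _ ≤ ∑ _j : Fin (m + 1), 2 ^ (2 * m) := Finset.sum_le_sum fun j _ =>
        (Set.ncard_image_le (Set.toFinite _)).trans_eq (nat_card_apply_eq_false (bit j))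
    _ = (m + 1) * 2 ^ (2 * m) := by simp

section Forcing

variable {S : Set ((Fin r → Bool) × Fin (r + 1))} {l l' : Fin (r + 1)} {v w : Fin r → Bool}

theorem butterfly_forced_up (hl : (l : ℕ) + 1 = l') (hvw : AgreeOff l v w)
    (h₀ : ZFForced (butterfly r) S (v, l)) (h₁ : ZFForced (butterfly r) S (v, l'))
    (hbelow : ∀ x : (Fin r → Bool) × Fin (r + 1), (x.2 : ℕ) + 1 = l →
      ZFForced (butterfly r) S x) :
    ZFForced (butterfly r) S (w, l') := by
  by_cases hvw' : v = w
  · rwa [← hvw']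
  refine .force h₀ (butterfly_adj_iff.2 (Or.inl ⟨hl, hvw⟩)) ?_
  rintro ⟨u, lu⟩ hadj hne
  rcases butterfly_adj_iff.1 hadj with ⟨hlu, hvu⟩ | ⟨hlu, -⟩
  · obtain rfl : lu = l' := Fin.ext (hlu.symm.trans hl)
    rcases hvu.eq_or_eq hvw hvw' with rfl | rfl
    exacts [h₁, absurd rfl hne]
  · exact hbelow _ hlu

theorem butterfly_forced_down (hl : (l : ℕ) + 1 = l') (hvw : AgreeOff l v w)
    (h₀ : ZFForced (butterfly r) S (v, l)) (h₁ : ZFForced (butterfly r) S (v, l'))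
    (habove : ∀ x : (Fin r → Bool) × Fin (r + 1), (x.2 : ℕ) = l' + 1 →
      ZFForced (butterfly r) S x) :
    ZFForced (butterfly r) S (w, l) := by
  by_cases hvw' : v = w
  · rwa [← hvw']
  refine .force h₁ (butterfly_adj_iff.2 (Or.inr ⟨hl, hvw.symm⟩)) ?_
  rintro ⟨u, lu⟩ hadj hne
  rcases butterfly_adj_iff.1 hadj with ⟨hlu, -⟩ | ⟨hlu, huv⟩
  · exact habove _ hlu.symm
  · obtain rfl : lu = l := Fin.ext (by simp only at hlu; omega)
    rcases huv.symm.eq_or_eq hvw hvw' with rfl | rfl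
    exacts [h₀, absurd rfl hne]

end Forcing

theorem isZeroForcingSet_evenStraightEdges (m : ℕ) :
    IsZeroForcingSet (butterfly (2 * m + 1))
      {x | ∃ e ∈ evenStraightEdges (2 * m + 1), x ∈ e} := by
  set S := {x | ∃ e ∈ evenStraightEdges (2 * m + 1), x ∈ e}
  let Forced : ℕ → Prop := fun l =>
    ∀ x : (Fin (2 * m + 1) → Bool) × Fin (2 * m + 2), (x.2 : ℕ) = l → ZFForced (butterfly _) S x
  have hodd_step : ∀ j, (∀ i < j, Forced (2 * i + 1)) → Forced (2 * j + 1) := by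
    rintro j hbelow ⟨w, l⟩ (hl : (l : ℕ) = 2 * j + 1)
    let k : Fin (2 * m + 1) := ⟨2 * j, by omega⟩
    exact butterfly_forced_up (l := k.castSucc) (by simp [k, hl]) (agreeOff_update w k false)
      (.init (update_mem_evenStraightEdges (even_two_mul j) w (Or.inl rfl)))
      (.init (update_mem_evenStraightEdges (even_two_mul j) w (Or.inr hl)))
      (fun x hx => hbelow (j - 1) (by simp [k] at hx; omega) x (by simp [k] at hx; omega))
  have heven_step : ∀ j ≤ m, (j < m → Forced (2 * j + 2)) → Forced (2 * j) := by
    rintro j hj habove ⟨w, l⟩ (hl : (l : ℕ) = 2 * j)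
    let k : Fin (2 * m + 1) := ⟨2 * j, by omega⟩
    exact butterfly_forced_down (l' := k.succ) (by simp [k, hl])
      (by rw [hl]; exact agreeOff_update w k false)
      (.init (update_mem_evenStraightEdges (even_two_mul j) w (Or.inl hl)))
      (.init (update_mem_evenStraightEdges (even_two_mul j) w (Or.inr (Fin.val_succ k))))
      (fun x hx => habove (by have := x.2.isLt; simp [k] at hx; omega) x
        (by simp [k] at hx; omega))
  have hodd : ∀ j, Forced (2 * j + 1) := fun j => Nat.strong_induction_on j hodd_step
  have heven : ∀ j ≤ m, Forced (2 * j) := fun j hj =>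
    Nat.decreasingInduction (motive := fun j _ => Forced (2 * j))
      (fun j hj h => heven_step j hj.le fun _ => by simpa [mul_add] using h)
      (heven_step m le_rfl fun h => absurd h (lt_irrefl m)) hj
  rintro ⟨w, l⟩
  obtain ⟨j, hj | hj⟩ := Nat.even_or_odd' l
  · exact heven j (by have := l.isLt; omega) _ hj
  · exact hodd j _ hj

end Butterfly

theorem edgeForcing_BF_odd_bounds (r : ℕ) (hodd : Odd r) (hr : 3 ≤ r) :
    2 ^ r ≤ edgeForcingNumber (butterfly r) ∧
      edgeForcingNumber (butterfly r) ≤ (r + 1) / 2 * 2 ^ (r - 1) := by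
  obtain ⟨m, rfl⟩ := hodd
  have hK : IsEdgeForcingSet (butterfly (2 * m + 1)) (evenStraightEdges (2 * m + 1)) :=
    ⟨evenStraightEdges_subset_edgeSet, evenStraightEdges_pairwise_disjoint,
      isZeroForcingSet_evenStraightEdges m⟩
  constructor
  · refine le_csInf ⟨_, _, hK, rfl⟩ ?_
    rintro _ ⟨K, hK', rfl⟩
    exact two_pow_le_ncard_of_isEdgeForcingSet_butterfly (by omega) hK'
  · calc edgeForcingNumber (butterfly (2 * m + 1))
          ≤ (evenStraightEdges (2 * m + 1)).ncard := Nat.sInf_le ⟨_, hK, rfl⟩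
      _ ≤ (m + 1) * 2 ^ (2 * m) := ncard_evenStraightEdges_le m
      _ = (2 * m + 1 + 1) / 2 * 2 ^ (2 * m + 1 - 1) := by
          rw [show (2 * m + 1 + 1) / 2 = m + 1 by omega, Nat.add_sub_cancel]
end

section
/- For r ≥ 4 even, the edge-forcing number of BF(r) satisfies 2^r ≤ ζ_e(BF(r)) ≤ (r/2 + 2) · 2^(r-1). -/
open SimpleGraph

/-!
Lower bound: a bottom vertex `(w, 0)` has the same neighbours as `(w', 0)` when `w, w'` differ
only in bit `0`, and likewise a top vertex with bit `r - 1`. A zero forcing set must contain a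
vertex of each of these `2 ^ r` twin pairs, and for `r ≥ 2` no edge joins two boundary vertices,
so an edge-forcing set has at least `2 ^ r` edges.

Upper bound: take every vertical edge between levels `0` and `1`; for `1 ≤ j ≤ (r - 2) / 2` the
vertical edges between levels `2j` and `2j + 1` at the words with
`w (2j - 1) ⊕ w (2j) ⊕ w (r - 1) = 1`; and the cross edges from level `r - 1` to level `r` at
the words where the last of these parities is `0`. Flipping bit `i - 1` toggles the parity governing
level `i`, so every level `i ≥ 1` meets each pair `{u, u with bit i - 1 flipped}`; hence
`(u, i - 1)` forces `(u, i)` level by level. There are `2 ^ r + ((r - 2) / 2 + 1) · 2 ^ (r - 1)`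
edges.
-/

open Finset Function

section ZeroForcing

variable {V : Type*} {G : SimpleGraph V}

/-- Twins: whichever of `a`, `b` were forced first, its forcer would be adjacent to the other,
still unforced, vertex as well. -/
theorem IsZeroForcingSet.mem_or_mem_of_adj_iff {S : Set V} (hS : IsZeroForcingSet G S)
    {a b : V} (hab : a ≠ b) (htwin : ∀ u, G.Adj u a ↔ G.Adj u b) : a ∈ S ∨ b ∈ S := by
  by_contra! hnot
  suffices ∀ v, ZFForced G S v → v ≠ a ∧ v ≠ b from (this a (hS a)).1 rfl
  intro v hv
  induction hv with
  | init hv => exact ⟨by rintro rfl; exact hnot.1 hv, by rintro rfl; exact hnot.2 hv⟩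
  | force _ hadj _ _ ih =>
    refine ⟨?_, ?_⟩
    · rintro rfl
      exact (ih b ((htwin _).1 hadj) hab.symm).2 rfl
    · rintro rfl
      exact (ih a ((htwin _).2 hadj) hab).1 rfl

theorem SimpleGraph.IsIndepSet.ncard_covered_le [Finite V] {T : Set V}
    (hT : G.IsIndepSet T) {K : Set (Sym2 V)} (hK : K ⊆ G.edgeSet) :
    {v ∈ T | ∃ e ∈ K, v ∈ e}.ncard ≤ K.ncard := by
  have hchoice : ∀ v, ∃ e, (∃ e ∈ K, v ∈ e) → e ∈ K ∧ v ∈ e := fun v => by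
    by_cases hv : ∃ e ∈ K, v ∈ e
    exacts [⟨hv.choose, fun _ => hv.choose_spec⟩, ⟨s(v, v), fun h => absurd h hv⟩]
  choose f hf using hchoice
  refine Set.ncard_le_ncard_of_injOn f (fun v hv => (hf v hv.2).1) fun v hv w hw hfvw => ?_
  by_contra hne
  have hedge : f v = s(v, w) :=
    (Sym2.mem_and_mem_iff hne).1 ⟨(hf v hv.2).2, hfvw ▸ (hf w hw.2).2⟩
  exact hT hv.1 hw.1 hne (G.mem_edgeSet.1 (hedge ▸ hK (hf v hv.2).1))

theorem pairwise_disjoint_image_mk {f : V → V} {L : Set V} (hf : Set.InjOn f L)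
    (hL : Disjoint L (f '' L)) :
    ((fun v => s(v, f v)) '' L).Pairwise fun e e' => ∀ x, x ∈ e → x ∉ e' := by
  rintro _ ⟨a, ha, rfl⟩ _ ⟨b, hb, rfl⟩ hne x hxa hxb
  simp only [Sym2.mem_iff] at hxa hxb
  rcases hxa with rfl | rfl <;> rcases hxb with hxb | hxb
  · exact hne (by rw [hxb])
  · exact Set.disjoint_left.1 hL ha ⟨b, hb, hxb.symm⟩
  · exact Set.disjoint_left.1 hL hb ⟨a, ha, hxb⟩
  · exact hne (by rw [hf ha hb hxb])

theorem edgeForcingNumber_le_ncard {K : Set (Sym2 V)} (hK : IsEdgeForcingSet G K) :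
    edgeForcingNumber G ≤ K.ncard :=
  Nat.sInf_le ⟨K, hK, rfl⟩

theorem le_edgeForcingNumber {n : ℕ} (hne : ∃ K, IsEdgeForcingSet G K)
    (h : ∀ K, IsEdgeForcingSet G K → n ≤ K.ncard) : n ≤ edgeForcingNumber G := by
  obtain ⟨K, hK⟩ := hne
  exact le_csInf ⟨_, K, hK, rfl⟩ (by rintro _ ⟨K, hK, rfl⟩; exact h K hK)

end ZeroForcing

section Involution

variable {α : Type*} [Fintype α] [DecidableEq α] {σ : α → α}

theorem card_le_two_mul_card_of_involutive (hσ : Involutive σ) {s : Finset α}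
    (hs : ∀ x, x ∈ s ∨ σ x ∈ s) : Fintype.card α ≤ 2 * #s := by
  have huniv : s ∪ s.image σ = univ := by
    refine eq_univ_of_forall fun x => ?_
    rcases hs x with hx | hx
    · exact mem_union_left _ hx
    · exact mem_union_right _ (mem_image.2 ⟨σ x, hx, hσ x⟩)
  calc Fintype.card α = #(s ∪ s.image σ) := by rw [huniv, card_univ]
    _ ≤ #s + #(s.image σ) := card_union_le _ _
    _ ≤ 2 * #s := by have := card_image_le (s := s) (f := σ); omega

theorem two_mul_card_filter_le_of_involutive (hσ : Involutive σ) {f : α → Bool}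
    (hf : ∀ x, f (σ x) = !f x) (b : Bool) : 2 * #{x | f x = b} ≤ Fintype.card α := by
  have hother : Fintype.card α ≤ 2 * #{x | f x = !b} :=
    card_le_two_mul_card_of_involutive hσ fun x => by
      cases hx : f x <;> cases b <;> simp [hf, hx]
  have hsplit := card_filter_add_card_filter_not (s := univ) (fun x => f x = b)
  have hnot : univ.filter (fun x => ¬f x = b) = univ.filter (fun x => f x = !b) := by
    ext x; cases f x <;> cases b <;> simp
  rw [hnot, card_univ] at hsplit
  omega

end Involution

namespace Butterfly

abbrev Vertex (r : ℕ) := (Fin r → Bool) × Fin (r + 1)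

variable {r : ℕ}

/-- Bits are indexed by `ℕ`, so that the bit toggled between levels `i` and `i + 1` is `i`
itself; flipping an index `≥ r` does nothing. -/
def flipBit (i : ℕ) (w : Fin r → Bool) : Fin r → Bool :=
  fun k => if (k : ℕ) = i then !w k else w k

def bit (w : Fin r → Bool) (i : ℕ) : Bool :=
  if h : i < r then w ⟨i, h⟩ else false

theorem flipBit_involutive (i : ℕ) : Involutive (flipBit (r := r) i) := fun w => by
  funext k
  by_cases hk : (k : ℕ) = i <;> simp [flipBit, hk]

theorem flipBit_ne_self {i : ℕ} (hi : i < r) (w : Fin r → Bool) : flipBit i w ≠ w :=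
  fun h => by simpa [flipBit] using congrFun h ⟨i, hi⟩

theorem bit_flipBit_self {i : ℕ} (hi : i < r) (w : Fin r → Bool) :
    bit (flipBit i w) i = !bit w i := by
  simp [bit, flipBit, hi]

theorem bit_flipBit_of_ne {i j : ℕ} (hji : j ≠ i) (w : Fin r → Bool) :
    bit (flipBit i w) j = bit w j := by
  by_cases hj : j < r <;> simp [bit, flipBit, hj, hji]

theorem forall_ne_iff_eq_flipBit {w v : Fin r → Bool} {i : ℕ} :
    (∀ k : Fin r, (w k ≠ v k ↔ (k : ℕ) = i)) ↔ v = flipBit i w := by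
  refine ⟨fun h => funext fun k => ?_, ?_⟩
  · have hk := h k
    revert hk
    by_cases hki : (k : ℕ) = i <;> simp only [flipBit, hki] <;> cases w k <;> cases v k <;> simp
  · rintro rfl k
    by_cases hki : (k : ℕ) = i <;> simp [flipBit, hki]

theorem val_clamp {i : ℕ} (hi : i ≤ r) : (Fin.clamp i r : ℕ) = i := by
  simp [hi]

theorem clamp_val (x : Fin (r + 1)) : Fin.clamp x r = x :=
  Fin.ext (val_clamp (Nat.lt_succ_iff.1 x.2))

theorem adj_iff {p q : Vertex r} :
    (butterfly r).Adj p q ↔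
      ((p.2 : ℕ) + 1 = q.2 ∧ (q.1 = p.1 ∨ q.1 = flipBit p.2 p.1)) ∨
      ((q.2 : ℕ) + 1 = p.2 ∧ (p.1 = q.1 ∨ p.1 = flipBit q.2 q.1)) := by
  rw [butterfly, fromRel_adj, forall_ne_iff_eq_flipBit, forall_ne_iff_eq_flipBit,
    eq_comm (a := p.1), eq_comm (a := q.1), and_iff_right_of_imp]
  rintro (⟨h, -⟩ | ⟨h, -⟩) rfl <;> omega

theorem adj_clamp_succ {i : ℕ} (hi : i < r) {w v : Fin r → Bool}
    (hv : v = w ∨ v = flipBit i w) :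
    (butterfly r).Adj (w, Fin.clamp i r) (v, Fin.clamp (i + 1) r) :=
  adj_iff.2 (.inl ⟨by simp [hi.le, Nat.succ_le_of_lt hi], by rwa [val_clamp hi.le]⟩)

def boundary (r : ℕ) (x : (Fin r → Bool) × Bool) : Vertex r :=
  (x.1, if x.2 then Fin.last r else 0)

def boundaryTwin (r : ℕ) (x : (Fin r → Bool) × Bool) : (Fin r → Bool) × Bool :=
  (flipBit (if x.2 then r - 1 else 0) x.1, x.2)

theorem boundaryTwin_involutive : Involutive (boundaryTwin r) :=
  fun x => Prod.ext (flipBit_involutive _ x.1) rfl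

theorem boundaryTwin_ne_self (hr : 1 ≤ r) (x : (Fin r → Bool) × Bool) :
    boundaryTwin r x ≠ x :=
  fun h => flipBit_ne_self (by split_ifs <;> omega) x.1 (congrArg Prod.fst h)

theorem boundary_injective (hr : 1 ≤ r) : Injective (boundary r) := by
  rintro ⟨w, b⟩ ⟨w', b'⟩ h
  simp only [boundary, Prod.mk.injEq] at h
  obtain ⟨rfl, h⟩ := h
  cases b <;> cases b' <;> simp_all [Fin.ext_iff]
  omega

theorem adj_mk_zero_iff {u : Vertex r} {w : Fin r → Bool} :
    (butterfly r).Adj u (w, 0) ↔ (u.2 : ℕ) = 1 ∧ (u.1 = w ∨ u.1 = flipBit 0 w) := by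
  simp [adj_iff, eq_comm (a := 1)]

theorem adj_mk_last_iff {u : Vertex r} {w : Fin r → Bool} :
    (butterfly r).Adj u (w, Fin.last r) ↔
      (u.2 : ℕ) + 1 = r ∧ (w = u.1 ∨ w = flipBit (r - 1) u.1) := by
  rw [adj_iff, Fin.val_last, or_iff_left (by have := u.2.isLt; omega)]
  exact and_congr_right fun hu => by rw [show (u.2 : ℕ) = r - 1 by omega]

theorem adj_boundary_iff_adj_boundary_boundaryTwin (x : (Fin r → Bool) × Bool) (u : Vertex r) :
    (butterfly r).Adj u (boundary r x) ↔ (butterfly r).Adj u (boundary r (boundaryTwin r x)) := by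
  obtain ⟨w, _ | _⟩ := x <;>
    simp only [boundary, boundaryTwin, Bool.false_eq_true, if_false, if_true]
  · rw [adj_mk_zero_iff, adj_mk_zero_iff, flipBit_involutive 0 w, or_comm]
  · rw [adj_mk_last_iff, adj_mk_last_iff, (flipBit_involutive _).eq_iff,
      (flipBit_involutive _).injective.eq_iff, or_comm]

theorem isIndepSet_range_boundary (hr : 2 ≤ r) :
    (butterfly r).IsIndepSet (Set.range (boundary r)) := by
  rintro _ ⟨⟨w, b⟩, rfl⟩ _ ⟨⟨w', b'⟩, rfl⟩ - hadj
  rw [adj_iff] at hadj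
  cases b <;> cases b' <;> simp [boundary] at hadj <;> omega

theorem two_pow_le_ncard_of_isEdgeForcingSet (hr : 2 ≤ r) {K : Set (Sym2 (Vertex r))}
    (hK : IsEdgeForcingSet (butterfly r) K) : 2 ^ r ≤ K.ncard := by
  classical
  obtain ⟨hKE, -, hZF⟩ := hK
  set s : Finset ((Fin r → Bool) × Bool) := {x | ∃ e ∈ K, boundary r x ∈ e}
  have hcover : ∀ x, x ∈ s ∨ boundaryTwin r x ∈ s := fun x => by
    simpa [s] using hZF.mem_or_mem_of_adj_iff
      ((boundary_injective (by omega)).ne (boundaryTwin_ne_self (by omega) x).symm)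
      (adj_boundary_iff_adj_boundary_boundaryTwin x)
  have hs : 2 ^ r * 2 ≤ 2 * #s := by
    simpa using card_le_two_mul_card_of_involutive boundaryTwin_involutive hcover
  have hsK : #s ≤ K.ncard := calc
    #s = (boundary r '' s).ncard := by
      rw [Set.ncard_image_of_injective _ (boundary_injective (by omega)), Set.ncard_coe_finset]
    _ ≤ {v ∈ Set.range (boundary r) | ∃ e ∈ K, v ∈ e}.ncard := by
      refine Set.ncard_le_ncard ?_
      rintro _ ⟨x, hx, rfl⟩
      exact ⟨⟨x, rfl⟩, by simpa [s] using hx⟩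
    _ ≤ K.ncard := (isIndepSet_range_boundary hr).ncard_covered_le hKE
  omega

/-- Level by level: once level `i` is forced, each `(u, i)` has, besides the forced level
`i - 1`, only the neighbours `(u, i + 1)` and `(flipBit i u, i + 1)`, and one of them is in `S`. -/
theorem isZeroForcingSet_of_mem_or_flipBit_mem {S : Set (Vertex r)} (h0 : ∀ u, (u, 0) ∈ S)
    (hstep : ∀ i < r, ∀ u,
      (u, Fin.clamp (i + 1) r) ∈ S ∨ (flipBit i u, Fin.clamp (i + 1) r) ∈ S) :
    IsZeroForcingSet (butterfly r) S := by
  suffices hlevel : ∀ i ≤ r, ∀ u, ZFForced (butterfly r) S (u, Fin.clamp i r) by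
    rintro ⟨u, i⟩
    simpa only [clamp_val] using hlevel i (Nat.lt_succ_iff.1 i.2) u
  intro i
  induction i using Nat.strong_induction_on with
  | _ i ih =>
    intro hi u
    rcases i with _ | i
    · exact .init (by rw [show Fin.clamp 0 r = 0 from Fin.ext (by simp)]; exact h0 u)
    by_cases hu : (u, Fin.clamp (i + 1) r) ∈ S
    · exact .init hu
    refine .force (ih i (by omega) (by omega) u) (adj_clamp_succ hi (.inl rfl))
      fun ⟨v, j⟩ hadj hne => ?_
    rw [adj_iff, val_clamp (by omega)] at hadj
    dsimp only at hadj
    rcases hadj with ⟨hj, rfl | rfl⟩ | ⟨hj, -⟩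
    · exact absurd (by rw [← clamp_val j, ← hj]) hne
    · rw [← clamp_val j, ← hj]
      exact .init ((hstep i hi _).resolve_left hu)
    · rw [← clamp_val j]
      exact ih j (by omega) (by omega) v

def blockParity (r j : ℕ) (w : Fin r → Bool) : Bool :=
  bit w (2 * j - 1) ^^ bit w (2 * j) ^^ bit w (r - 1)

theorem blockParity_flipBit {j i : ℕ} (hj : 1 ≤ j) (hjr : 2 * j + 2 ≤ r)
    (hi : i = 2 * j - 1 ∨ i = 2 * j ∨ i = r - 1) (w : Fin r → Bool) :
    blockParity r j (flipBit i w) = !blockParity r j w := by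
  rcases hi with rfl | rfl | rfl <;>
    simp (disch := omega) [blockParity, bit_flipBit_self, bit_flipBit_of_ne]

def lowerEnds (r : ℕ) : Finset (Vertex r) :=
  (univ.image fun w => (w, 0)) ∪
  ((Icc 1 ((r - 2) / 2)).biUnion fun j =>
    (univ.filter (blockParity r j · = true)).image fun w => (w, Fin.clamp (2 * j) r)) ∪
  ((univ.filter (blockParity r ((r - 2) / 2) · = false)).image fun w => (w, Fin.clamp (r - 1) r))

theorem mem_lowerEnds_iff {v : Vertex r} :
    v ∈ lowerEnds r ↔ (v.2 : ℕ) = 0 ∨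
      (∃ j, 1 ≤ j ∧ j ≤ (r - 2) / 2 ∧ (v.2 : ℕ) = 2 * j ∧
        blockParity r j v.1 = true) ∨
      ((v.2 : ℕ) = r - 1 ∧ blockParity r ((r - 2) / 2) v.1 = false) := by
  obtain ⟨w, i⟩ := v
  simp only [lowerEnds, mem_union, mem_image, mem_biUnion, mem_filter, mem_univ, true_and,
    mem_Icc, Prod.mk.injEq, exists_eq_left, Fin.ext_iff, Fin.coe_clamp, Fin.val_zero]
  constructor
  · rintro ((h | ⟨j, ⟨hj1, hj2⟩, _, hw, rfl, hi⟩) | ⟨_, hw, rfl, hi⟩)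
    · exact .inl h.symm
    · exact .inr (.inl ⟨j, hj1, hj2, by omega, hw⟩)
    · exact .inr (.inr ⟨by omega, hw⟩)
  · rintro (h | ⟨j, hj1, hj2, hi, hw⟩ | ⟨hi, hw⟩)
    · exact .inl (.inl h.symm)
    · exact .inl (.inr ⟨j, ⟨hj1, hj2⟩, w, hw, rfl, by omega⟩)
    · exact .inr ⟨w, hw, rfl, by omega⟩

def upper (v : Vertex r) : Vertex r :=
  (if (v.2 : ℕ) = r - 1 then flipBit (r - 1) v.1 else v.1, Fin.clamp (v.2 + 1) r)

def matching (r : ℕ) : Finset (Sym2 (Vertex r)) :=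
  (lowerEnds r).image fun v => s(v, upper v)

theorem upper_mk_clamp {i : ℕ} (hi : i ≤ r) (w : Fin r → Bool) :
    upper (w, Fin.clamp i r) =
      (if i = r - 1 then flipBit (r - 1) w else w, Fin.clamp (i + 1) r) := by
  simp only [upper, val_clamp hi]

theorem adj_upper {v : Vertex r} (hv : (v.2 : ℕ) < r) : (butterfly r).Adj v (upper v) := by
  obtain ⟨w, i⟩ := v
  rw [← clamp_val i, upper_mk_clamp (Nat.lt_succ_iff.1 i.2)]
  refine adj_clamp_succ hv ?_
  split_ifs with h
  exacts [.inr (by rw [h]), .inl rfl]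

theorem upper_injOn : Set.InjOn upper {v : Vertex r | (v.2 : ℕ) < r} := by
  rintro ⟨w, i⟩ hi ⟨w', i'⟩ hi' h
  simp only [Set.mem_ofPred_eq] at hi hi'
  simp only [upper, Prod.mk.injEq, Fin.ext_iff, Fin.coe_clamp] at h
  obtain ⟨hw, hii'⟩ := h
  obtain rfl : i = i' := Fin.ext (by omega)
  split_ifs at hw
  exacts [Prod.ext ((flipBit_involutive _).injective hw) rfl, Prod.ext hw rfl]

theorem val_lt_of_mem_lowerEnds (hr : 2 ≤ r) {v : Vertex r} (hv : v ∈ lowerEnds r) :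
    (v.2 : ℕ) < r := by
  rw [mem_lowerEnds_iff] at hv
  omega

theorem val_upper {v : Vertex r} (hv : (v.2 : ℕ) < r) : ((upper v).2 : ℕ) = v.2 + 1 :=
  val_clamp hv

theorem disjoint_lowerEnds_image_upper (hr : 4 ≤ r) :
    Disjoint (lowerEnds r : Set (Vertex r)) (upper '' lowerEnds r) := by
  rw [Set.disjoint_left]
  rintro _ hv ⟨x, hx, rfl⟩
  have hx2 := val_lt_of_mem_lowerEnds (by omega) hx
  rw [Finset.mem_coe, mem_lowerEnds_iff, val_upper hx2] at hv
  rw [Finset.mem_coe, mem_lowerEnds_iff] at hx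
  rcases hx with hx | ⟨j, hj, hjr, hx, hw⟩ | ⟨hx, -⟩ <;>
    rcases hv with hv | ⟨j', hj', hjr', hv, -⟩ | ⟨hv, hw'⟩ <;> try omega
  obtain rfl : j = (r - 2) / 2 := by omega
  rw [upper, if_neg (by omega), hw] at hw'
  exact Bool.noConfusion hw'

def endpoints (r : ℕ) : Set (Vertex r) :=
  lowerEnds r ∪ upper '' lowerEnds r

theorem setOf_mem_matching_eq_endpoints :
    {x | ∃ e ∈ (matching r : Set (Sym2 (Vertex r))), x ∈ e} = endpoints r := by
  ext x
  simp only [matching, endpoints, coe_image, Set.mem_image, exists_exists_and_eq_and,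
    Sym2.mem_iff, Set.mem_union, mem_coe]
  constructor
  · rintro ⟨v, hv, rfl | rfl⟩
    exacts [.inl hv, .inr ⟨v, hv, rfl⟩]
  · rintro (hx | ⟨v, hv, rfl⟩)
    exacts [⟨x, hx, .inl rfl⟩, ⟨v, hv, .inr rfl⟩]

theorem mem_or_flipBit_mem_of_blockParity {S : Set (Vertex r)} {c : Fin (r + 1)} {i j : ℕ}
    (hj : 1 ≤ j) (hjr : 2 * j + 2 ≤ r) (hi : i = 2 * j - 1 ∨ i = 2 * j ∨ i = r - 1)
    (b : Bool) (hS : ∀ w, blockParity r j w = b → (w, c) ∈ S) (u : Fin r → Bool) :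
    (u, c) ∈ S ∨ (flipBit i u, c) ∈ S := by
  by_cases hu : blockParity r j u = b
  · exact .inl (hS u hu)
  · exact .inr (hS _ (by rw [blockParity_flipBit hj hjr hi]; cases b <;> simp_all))

theorem mem_or_flipBit_mem_endpoints (heven : Even r) (hr : 4 ≤ r) {i : ℕ} (hi : i < r)
    (u : Fin r → Bool) :
    (u, Fin.clamp (i + 1) r) ∈ endpoints r ∨
      (flipBit i u, Fin.clamp (i + 1) r) ∈ endpoints r := by
  obtain ⟨k, rfl⟩ := heven
  rcases Nat.even_or_odd' i with ⟨j, rfl | rfl⟩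
  · obtain rfl | hj := Nat.eq_zero_or_pos j
    · refine .inl (.inr ⟨(u, 0), mem_lowerEnds_iff.2 (.inl rfl), ?_⟩)
      simp [upper, show 0 ≠ k + k - 1 by omega]
    refine mem_or_flipBit_mem_of_blockParity hj (by omega) (.inr (.inl rfl)) true
      (fun w hw => .inr ⟨(w, Fin.clamp (2 * j) _), ?_, ?_⟩) u
    · exact mem_lowerEnds_iff.2 (.inr (.inl ⟨j, hj, by omega, val_clamp (by omega), hw⟩))
    · rw [upper_mk_clamp (by omega), if_neg (by omega)]
  obtain hlast | hlt := eq_or_ne (2 * j + 1) (k + k - 1)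
  -- Level `r` is covered by the cross edges: `(w, r)` is the upper end of the one at
  -- `flipBit (r - 1) w`.
  · refine mem_or_flipBit_mem_of_blockParity (j := (k + k - 2) / 2) (by omega) (by omega)
      (.inr (.inr hlast)) true
      (fun w hw => .inr ⟨(flipBit (k + k - 1) w, Fin.clamp (k + k - 1) _), ?_, ?_⟩) u
    · refine mem_lowerEnds_iff.2 (.inr (.inr ⟨val_clamp (by omega), ?_⟩))
      rw [blockParity_flipBit (by omega) (by omega) (.inr (.inr rfl)), hw]
      rfl
    · rw [upper_mk_clamp (by omega), if_pos rfl, flipBit_involutive, hlast,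
        show k + k - 1 + 1 = k + k by omega]
  · refine mem_or_flipBit_mem_of_blockParity (j := j + 1) (by omega) (by omega) (.inl (by omega))
      true (fun w hw => .inl ?_) u
    exact mem_lowerEnds_iff.2
      (.inr (.inl ⟨j + 1, by omega, by omega, val_clamp (by omega), hw⟩))

theorem two_mul_card_filter_blockParity_le {j : ℕ} (hj : 1 ≤ j) (hjr : 2 * j + 2 ≤ r)
    (b : Bool) :
    2 * #(univ.filter (blockParity r j · = b)) ≤ 2 ^ r := by
  simpa using two_mul_card_filter_le_of_involutive (flipBit_involutive (2 * j))
    (blockParity_flipBit hj hjr (.inr (.inl rfl))) b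

theorem card_lowerEnds_le (hr : 4 ≤ r) : #(lowerEnds r) ≤ (r / 2 + 2) * 2 ^ (r - 1) := by
  set m := (r - 2) / 2
  have hpow : 2 ^ r = 2 * 2 ^ (r - 1) := by rw [← pow_succ']; congr; omega
  have hbottom : #(univ.image fun w => ((w, 0) : Vertex r)) ≤ 2 ^ r :=
    card_image_le.trans (by simp)
  have hblocks : #((Icc 1 m).biUnion fun j => (univ.filter (blockParity r j · = true)).image
      fun w => ((w, Fin.clamp (2 * j) r) : Vertex r)) ≤ m * 2 ^ (r - 1) := by
    refine card_biUnion_le.trans ((sum_le_sum (g := fun _ => 2 ^ (r - 1)) fun j hj => ?_).trans_eq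
      (by simp))
    have := two_mul_card_filter_blockParity_le (r := r) (j := j) (mem_Icc.1 hj).1
      (by have := (mem_Icc.1 hj).2; omega) true
    exact card_image_le.trans (by omega)
  have hcross : #((univ.filter (blockParity r m · = false)).image
      fun w => ((w, Fin.clamp (r - 1) r) : Vertex r)) ≤ 2 ^ (r - 1) := by
    have := two_mul_card_filter_blockParity_le (r := r) (j := m) (by omega) (by omega) false
    exact card_image_le.trans (by omega)
  calc #(lowerEnds r) ≤ 2 ^ r + m * 2 ^ (r - 1) + 2 ^ (r - 1) :=
        (card_union_le _ _).trans (by gcongr; exact (card_union_le _ _).trans (by gcongr))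
    _ = (r / 2 + 2) * 2 ^ (r - 1) := by rw [hpow, show r / 2 + 2 = m + 3 by omega]; ring

theorem isEdgeForcingSet_matching (heven : Even r) (hr : 4 ≤ r) :
    IsEdgeForcingSet (butterfly r) (matching r) := by
  have hlt : ∀ v ∈ lowerEnds r, (v.2 : ℕ) < r := fun v => val_lt_of_mem_lowerEnds (by omega)
  refine ⟨?_, ?_, ?_⟩
  · simp only [matching, coe_image, Set.image_subset_iff]
    exact fun v hv => adj_upper (hlt v hv)
  · rw [matching, coe_image]
    exact pairwise_disjoint_image_mk (upper_injOn.mono hlt) (disjoint_lowerEnds_image_upper hr)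
  · rw [setOf_mem_matching_eq_endpoints]
    exact isZeroForcingSet_of_mem_or_flipBit_mem
      (fun u => .inl (mem_lowerEnds_iff.2 (.inl rfl)))
      (fun _ hi u => mem_or_flipBit_mem_endpoints heven hr hi u)

theorem card_matching_le (hr : 4 ≤ r) : #(matching r) ≤ (r / 2 + 2) * 2 ^ (r - 1) :=
  card_image_le.trans (card_lowerEnds_le hr)

end Butterfly

theorem edgeForcing_BF_even_bounds (r : ℕ) (heven : Even r) (hr : 4 ≤ r) :
    2 ^ r ≤ edgeForcingNumber (butterfly r) ∧
      edgeForcingNumber (butterfly r) ≤ (r / 2 + 2) * 2 ^ (r - 1) := by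
  have hmatching := Butterfly.isEdgeForcingSet_matching heven hr
  refine ⟨le_edgeForcingNumber ⟨_, hmatching⟩ fun K hK =>
    Butterfly.two_pow_le_ncard_of_isEdgeForcingSet (by omega) hK, ?_⟩
  calc edgeForcingNumber (butterfly r) ≤ (Butterfly.matching r : Set _).ncard :=
        edgeForcingNumber_le_ncard hmatching
    _ = #(Butterfly.matching r) := Set.ncard_coe_finset _
    _ ≤ (r / 2 + 2) * 2 ^ (r - 1) := Butterfly.card_matching_le hr
end
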